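/- Verification of approximate infinite-step opacity: a finite metric system S is δ-approximate infinite-step opaque if and only if for every reachable state (x,q) of the δ-approximate initial-state estimator S_I and every reachable state (x',q') of the δ-approximate current-state estimator S_C, x = x' ∈ X_S implies q ∩ q' ⊄ X_S. -/
import Mathlib


open Metric Set

section OpacityDefs

variable {X U Y Xa Ua Xb Ub Xc Uc : Type*}

/-- A run of length `n` of the system with transition relation `tr`
(each step uses some input). -/
def IsRun (tr : X → U → X → Prop) (n : ℕ) (x : ℕ → X) : Prop :=
  ∀ i < n, ∃ u, tr (x i) u (x (i + 1))

/-- Exact initial-state opacity. -/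
def ExactInitOpaque {Y : Type*} (X0 XS : Set X) (tr : X → U → X → Prop)
    (H : X → Y) : Prop :=
  ∀ n : ℕ, ∀ x : ℕ → X, x 0 ∈ X0 ∩ XS → IsRun tr n x →
    ∃ x' : ℕ → X, x' 0 ∈ X0 \ XS ∧ IsRun tr n x' ∧ ∀ i ≤ n, H (x i) = H (x' i)

/-- δ-approximate initial-state opacity. -/
def ApproxInitOpaque [MetricSpace Y] (X0 XS : Set X) (tr : X → U → X → Prop)
    (H : X → Y) (δ : ℝ) : Prop :=
  ∀ n : ℕ, ∀ x : ℕ → X, x 0 ∈ X0 ∩ XS → IsRun tr n x →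
    ∃ x' : ℕ → X, x' 0 ∈ X0 \ XS ∧ IsRun tr n x' ∧
      ∀ i ≤ n, dist (H (x i)) (H (x' i)) ≤ δ

/-- δ-approximate current-state opacity. -/
def ApproxCurOpaque [MetricSpace Y] (X0 XS : Set X) (tr : X → U → X → Prop)
    (H : X → Y) (δ : ℝ) : Prop :=
  ∀ n : ℕ, ∀ x : ℕ → X, x 0 ∈ X0 → IsRun tr n x → x n ∈ XS →
    ∃ x' : ℕ → X, x' 0 ∈ X0 ∧ IsRun tr n x' ∧ x' n ∉ XS ∧
      ∀ i ≤ n, dist (H (x i)) (H (x' i)) ≤ δ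

/-- δ-approximate infinite-step opacity. -/
def ApproxInfOpaque [MetricSpace Y] (X0 XS : Set X) (tr : X → U → X → Prop)
    (H : X → Y) (δ : ℝ) : Prop :=
  ∀ n : ℕ, ∀ x : ℕ → X, ∀ k ≤ n, x 0 ∈ X0 → IsRun tr n x → x k ∈ XS →
    ∃ x' : ℕ → X, x' 0 ∈ X0 ∧ IsRun tr n x' ∧ x' k ∉ XS ∧
      ∀ i ≤ n, dist (H (x i)) (H (x' i)) ≤ δ

/-- Standing assumption: no initial state has all its δ-close initial states secret. -/
def StandingAssumption [MetricSpace Y] (X0 XS : Set X) (H : X → Y) (δ : ℝ) : Prop :=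
  ∀ x0 ∈ X0, ¬ ({x ∈ X0 | dist (H x0) (H x) ≤ δ} ⊆ XS)

/-- Predecessors of a set of states (under any input). -/
def PreSet (tr : X → U → X → Prop) (q : Set X) : Set X :=
  {z | ∃ u, ∃ w ∈ q, tr z u w}

/-- Successors of a set of states (under any input). -/
def PostSet (tr : X → U → X → Prop) (q : Set X) : Set X :=
  {z | ∃ u, ∃ w ∈ q, tr w u z}

/-- Initial states of the δ-approximate initial-state estimator. -/
def InitEstInit [MetricSpace Y] (H : X → Y) (δ : ℝ) : Set (X × Set X) :=
  {p | p.2 = {x' | dist (H p.1) (H x') ≤ δ}}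

/-- Transition relation of the δ-approximate initial-state estimator. -/
def InitEstTr [MetricSpace Y] (tr : X → U → X → Prop) (H : X → Y) (δ : ℝ)
    (p : X × Set X) (u : U) (p' : X × Set X) : Prop :=
  tr p'.1 u p.1 ∧ p'.2 = PreSet tr p.2 ∩ {x'' | dist (H p'.1) (H x'') ≤ δ}

/-- Reachable states of the δ-approximate initial-state estimator. -/
def InitEstReach [MetricSpace Y] (tr : X → U → X → Prop) (H : X → Y) (δ : ℝ) :
    Set (X × Set X) :=
  {p | ∃ (n : ℕ) (pr : ℕ → X × Set X) (u : ℕ → U), pr 0 ∈ InitEstInit H δ ∧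
    (∀ i < n, InitEstTr tr H δ (pr i) (u i) (pr (i + 1))) ∧ pr n = p}

/-- Initial states of the δ-approximate current-state estimator. -/
def CurEstInit [MetricSpace Y] (X0 : Set X) (H : X → Y) (δ : ℝ) : Set (X × Set X) :=
  {p | p.1 ∈ X0 ∧ p.2 = {x' ∈ X0 | dist (H p.1) (H x') ≤ δ}}

/-- Transition relation of the δ-approximate current-state estimator. -/
def CurEstTr [MetricSpace Y] (tr : X → U → X → Prop) (H : X → Y) (δ : ℝ)
    (p : X × Set X) (u : U) (p' : X × Set X) : Prop :=
  tr p.1 u p'.1 ∧ p'.2 = PostSet tr p.2 ∩ {x'' | dist (H p'.1) (H x'') ≤ δ}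

/-- Reachable states of the δ-approximate current-state estimator. -/
def CurEstReach [MetricSpace Y] (X0 : Set X) (tr : X → U → X → Prop) (H : X → Y)
    (δ : ℝ) : Set (X × Set X) :=
  {p | ∃ (n : ℕ) (pr : ℕ → X × Set X) (u : ℕ → U), pr 0 ∈ CurEstInit X0 H δ ∧
    (∀ i < n, CurEstTr tr H δ (pr i) (u i) (pr (i + 1))) ∧ pr n = p}

/-- ε-approximate initial-state opacity preserving simulation relation from
system `a` to system `b`. -/
def InitSOPSim [MetricSpace Y] (Xa0 XaS : Set Xa) (tra : Xa → Ua → Xa → Prop)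
    (Ha : Xa → Y) (Xb0 XbS : Set Xb) (trb : Xb → Ub → Xb → Prop) (Hb : Xb → Y)
    (ε : ℝ) (R : Set (Xa × Xb)) : Prop :=
  (∀ xa0 ∈ Xa0 ∩ XaS, ∃ xb0 ∈ Xb0 ∩ XbS, (xa0, xb0) ∈ R) ∧
  (∀ xb0 ∈ Xb0 \ XbS, ∃ xa0 ∈ Xa0 \ XaS, (xa0, xb0) ∈ R) ∧
  (∀ p ∈ R, dist (Ha p.1) (Hb p.2) ≤ ε) ∧
  (∀ p ∈ R, ∀ (ua : Ua) (xa' : Xa), tra p.1 ua xa' →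
    ∃ (ub : Ub) (xb' : Xb), trb p.2 ub xb' ∧ (xa', xb') ∈ R) ∧
  (∀ p ∈ R, ∀ (ub : Ub) (xb' : Xb), trb p.2 ub xb' →
    ∃ (ua : Ua) (xa' : Xa), tra p.1 ua xa' ∧ (xa', xb') ∈ R)

/-- ε-approximate current-state opacity preserving simulation relation from
system `a` to system `b`. -/
def CurSOPSim [MetricSpace Y] (Xa0 XaS : Set Xa) (tra : Xa → Ua → Xa → Prop)
    (Ha : Xa → Y) (Xb0 XbS : Set Xb) (trb : Xb → Ub → Xb → Prop) (Hb : Xb → Y)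
    (ε : ℝ) (R : Set (Xa × Xb)) : Prop :=
  (∀ xa0 ∈ Xa0, ∃ xb0 ∈ Xb0, (xa0, xb0) ∈ R) ∧
  (∀ p ∈ R, dist (Ha p.1) (Hb p.2) ≤ ε) ∧
  (∀ p ∈ R, ∀ (ua : Ua) (xa' : Xa), tra p.1 ua xa' →
    ∃ (ub : Ub) (xb' : Xb), trb p.2 ub xb' ∧ (xa', xb') ∈ R) ∧
  (∀ p ∈ R, ∀ (ua : Ua) (xa' : Xa), tra p.1 ua xa' → xa' ∈ XaS →
    ∃ (ub : Ub) (xb' : Xb), trb p.2 ub xb' ∧ xb' ∈ XbS ∧ (xa', xb') ∈ R) ∧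
  (∀ p ∈ R, ∀ (ub : Ub) (xb' : Xb), trb p.2 ub xb' →
    ∃ (ua : Ua) (xa' : Xa), tra p.1 ua xa' ∧ (xa', xb') ∈ R) ∧
  (∀ p ∈ R, ∀ (ub : Ub) (xb' : Xb), trb p.2 ub xb' → xb' ∉ XbS →
    ∃ (ua : Ua) (xa' : Xa), tra p.1 ua xa' ∧ xa' ∉ XaS ∧ (xa', xb') ∈ R)

/-- ε-approximate infinite-step opacity preserving simulation relation:
simultaneously an ε-InitSOP and an ε-CurSOP simulation relation. -/
def InfSOPSim [MetricSpace Y] (Xa0 XaS : Set Xa) (tra : Xa → Ua → Xa → Prop)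
    (Ha : Xa → Y) (Xb0 XbS : Set Xb) (trb : Xb → Ub → Xb → Prop) (Hb : Xb → Y)
    (ε : ℝ) (R : Set (Xa × Xb)) : Prop :=
  InitSOPSim Xa0 XaS tra Ha Xb0 XbS trb Hb ε R ∧
  CurSOPSim Xa0 XaS tra Ha Xb0 XbS trb Hb ε R

end OpacityDefs


section AuxLemmas

variable {X U Y : Type*} [MetricSpace Y]

/-- Prepend a value to a sequence. -/
def consF {A : Type*} (a : A) (w : ℕ → A) : ℕ → A :=
  fun i => match i with | 0 => a | (i + 1) => w i

/-- Replace the values of a sequence from index `k+1` on by a constant. -/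
def snocF {A : Type*} (k : ℕ) (w : ℕ → A) (a : A) : ℕ → A :=
  fun i => if i = k + 1 then a else w i

/-- Update a sequence at index `k`. -/
def updF {A : Type*} (k : ℕ) (w : ℕ → A) (a : A) : ℕ → A :=
  fun i => if i = k then a else w i

/-- Concatenate two sequences, switching at index `k`. -/
def catF {A : Type*} (k : ℕ) (y v : ℕ → A) : ℕ → A :=
  fun i => if i < k then y i else v (i - k)

lemma snocF_le {A : Type*} {k i : ℕ} {w : ℕ → A} {a : A} (h : i ≤ k) :
    snocF k w a i = w i := if_neg (by omega)

lemma snocF_top {A : Type*} {k : ℕ} {w : ℕ → A} {a : A} :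
    snocF k w a (k + 1) = a := if_pos rfl

lemma updF_ne {A : Type*} {k i : ℕ} {w : ℕ → A} {a : A} (h : i ≠ k) :
    updF k w a i = w i := if_neg h

lemma updF_eq {A : Type*} {k : ℕ} {w : ℕ → A} {a : A} :
    updF k w a k = a := if_pos rfl

lemma catF_ge {A : Type*} {k i : ℕ} {y v : ℕ → A} (h : k ≤ i) :
    catF k y v i = v (i - k) := if_neg (by omega)

lemma catF_le {A : Type*} {k i : ℕ} {y v : ℕ → A} (hyv : y k = v 0) (h : i ≤ k) :
    catF k y v i = y i := by
  rcases Nat.lt_or_ge i k with h' | h'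
  · exact if_pos h'
  · have : i = k := by omega
    subst this
    rw [catF_ge le_rfl, Nat.sub_self, ← hyv]

/-- States that start a run of length `n` δ-matching the run `v`. -/
def MatchI (tr : X → U → X → Prop) (H : X → Y) (δ : ℝ) (n : ℕ) (v : ℕ → X) : Set X :=
  {z | ∃ w : ℕ → X, IsRun tr n w ∧ w 0 = z ∧ ∀ i ≤ n, dist (H (v i)) (H (w i)) ≤ δ}

/-- States that end a run of length `k` from `X0` δ-matching the run `y`. -/
def MatchC (X0 : Set X) (tr : X → U → X → Prop) (H : X → Y) (δ : ℝ) (k : ℕ)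
    (y : ℕ → X) : Set X :=
  {z | ∃ w : ℕ → X, w 0 ∈ X0 ∧ IsRun tr k w ∧ w k = z ∧
    ∀ i ≤ k, dist (H (y i)) (H (w i)) ≤ δ}

lemma isRun_mono {tr : X → U → X → Prop} {n m : ℕ} {x : ℕ → X}
    (h : IsRun tr n x) (hm : m ≤ n) : IsRun tr m x :=
  fun i hi => h i (lt_of_lt_of_le hi hm)

lemma matchI_zero (tr : X → U → X → Prop) (H : X → Y) (δ : ℝ) (v : ℕ → X) :
    MatchI tr H δ 0 v = {z | dist (H (v 0)) (H z) ≤ δ} := by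
  ext z
  constructor
  · rintro ⟨w, -, hw0, hd⟩
    have := hd 0 le_rfl
    rwa [hw0] at this
  · intro hz
    refine ⟨fun _ => z, fun i hi => absurd hi (by omega), rfl, ?_⟩
    intro i hi
    have : i = 0 := by omega
    subst this
    exact hz

lemma matchC_zero (X0 : Set X) (tr : X → U → X → Prop) (H : X → Y) (δ : ℝ)
    (y : ℕ → X) :
    MatchC X0 tr H δ 0 y = {z ∈ X0 | dist (H (y 0)) (H z) ≤ δ} := by
  ext z
  constructor
  · rintro ⟨w, hw0, -, hwk, hd⟩
    have := hd 0 le_rfl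
    rw [hwk] at this
    exact ⟨hwk ▸ hw0, this⟩
  · rintro ⟨hz0, hz⟩
    refine ⟨fun _ => z, hz0, fun i hi => absurd hi (by omega), rfl, ?_⟩
    intro i hi
    have : i = 0 := by omega
    subst this
    exact hz

lemma matchI_congr {tr : X → U → X → Prop} {H : X → Y} {δ : ℝ} {n : ℕ}
    {v v' : ℕ → X} (h : ∀ i ≤ n, v i = v' i) :
    MatchI tr H δ n v = MatchI tr H δ n v' := by
  ext z
  constructor <;> rintro ⟨w, hrun, hw0, hd⟩ <;>
    exact ⟨w, hrun, hw0, fun i hi => by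
      first
        | (rw [← h i hi]; exact hd i hi)
        | (rw [h i hi]; exact hd i hi)⟩

lemma matchC_congr {X0 : Set X} {tr : X → U → X → Prop} {H : X → Y} {δ : ℝ}
    {k : ℕ} {y y' : ℕ → X} (h : ∀ i ≤ k, y i = y' i) :
    MatchC X0 tr H δ k y = MatchC X0 tr H δ k y' := by
  ext z
  constructor <;> rintro ⟨w, hw0, hrun, hwk, hd⟩ <;>
    exact ⟨w, hw0, hrun, hwk, fun i hi => by
      first
        | (rw [← h i hi]; exact hd i hi)
        | (rw [h i hi]; exact hd i hi)⟩

lemma matchI_succ (tr : X → U → X → Prop) (H : X → Y) (δ : ℝ) (n : ℕ)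
    (v : ℕ → X) :
    MatchI tr H δ (n + 1) v =
      PreSet tr (MatchI tr H δ n (fun i => v (i + 1))) ∩
        {z | dist (H (v 0)) (H z) ≤ δ} := by
  ext z
  constructor
  · rintro ⟨w, hrun, hw0, hd⟩
    obtain ⟨u, hu⟩ := hrun 0 (by omega)
    rw [hw0] at hu
    have hz := hd 0 (by omega)
    rw [hw0] at hz
    exact ⟨⟨u, w 1, ⟨fun i => w (i + 1), fun i hi => hrun (i + 1) (by omega), rfl,
      fun i hi => hd (i + 1) (by omega)⟩, hu⟩, hz⟩
  · rintro ⟨⟨u, w0, ⟨w, hrun, hw0, hd⟩, htr⟩, hz⟩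
    rw [← hw0] at htr
    refine ⟨consF z w, ?_, rfl, ?_⟩
    · intro i hi
      cases i with
      | zero => exact ⟨u, htr⟩
      | succ i => exact hrun i (by omega)
    · intro i hi
      cases i with
      | zero => exact hz
      | succ i => exact hd i (by omega)

lemma matchC_succ (X0 : Set X) (tr : X → U → X → Prop) (H : X → Y) (δ : ℝ)
    (k : ℕ) (y : ℕ → X) :
    MatchC X0 tr H δ (k + 1) y =
      PostSet tr (MatchC X0 tr H δ k y) ∩
        {z | dist (H (y (k + 1))) (H z) ≤ δ} := by
  ext z
  constructor
  · rintro ⟨w, hw0, hrun, hwk, hd⟩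
    obtain ⟨u, hu⟩ := hrun k (by omega)
    rw [hwk] at hu
    have hz := hd (k + 1) le_rfl
    rw [hwk] at hz
    exact ⟨⟨u, w k, ⟨w, hw0, isRun_mono hrun (by omega), rfl,
      fun i hi => hd i (by omega)⟩, hu⟩, hz⟩
  · rintro ⟨⟨u, w0, ⟨w, hw0, hrun, hwk, hd⟩, htr⟩, hz⟩
    rw [← hwk] at htr
    refine ⟨snocF k w z, ?_, ?_, snocF_top, ?_⟩
    · rw [snocF_le (Nat.zero_le k)]; exact hw0
    · intro i hi
      rcases Nat.lt_or_ge i k with h | h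
      · obtain ⟨u', hu'⟩ := hrun i h
        refine ⟨u', ?_⟩
        rw [snocF_le h.le, snocF_le (by omega : i + 1 ≤ k)]
        exact hu'
      · have : i = k := by omega
        subst this
        refine ⟨u, ?_⟩
        rw [snocF_le le_rfl, snocF_top]
        exact htr
    · intro i hi
      rcases Nat.lt_or_ge i (k + 1) with h | h
      · rw [snocF_le (by omega : i ≤ k)]
        exact hd i (by omega)
      · have : i = k + 1 := by omega
        subst this
        rw [snocF_top]
        exact hz

end AuxLemmas

section ReachLemmas

variable {X U Y : Type*} [MetricSpace Y]

lemma initEst_reach_of_run [Nonempty U] (tr : X → U → X → Prop) (H : X → Y)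
    (δ : ℝ) : ∀ (n : ℕ) (v : ℕ → X), IsRun tr n v →
      (v 0, MatchI tr H δ n v) ∈ InitEstReach tr H δ := by
  intro n
  induction n with
  | zero =>
    intro v _
    exact ⟨0, fun _ => (v 0, MatchI tr H δ 0 v), fun _ => Classical.arbitrary U,
      matchI_zero tr H δ v, fun i hi => absurd hi (by omega), rfl⟩
  | succ n ih =>
    intro v hrun
    obtain ⟨u0, hu0⟩ := hrun 0 (by omega)
    obtain ⟨m, pr, u, h0, hstep, hm⟩ :=
      ih (fun i => v (i + 1)) (fun i hi => hrun (i + 1) (by omega))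
    refine ⟨m + 1, snocF m pr (v 0, MatchI tr H δ (n + 1) v), updF m u u0,
      ?_, ?_, snocF_top⟩
    · rw [snocF_le (Nat.zero_le m)]; exact h0
    · intro i hi
      rcases Nat.lt_or_ge i m with h | h
      · rw [snocF_le (by omega : i ≤ m), snocF_le (by omega : i + 1 ≤ m),
          updF_ne (by omega : i ≠ m)]
        exact hstep i h
      · have : i = m := by omega
        subst this
        rw [snocF_le le_rfl, snocF_top, updF_eq]
        refine ⟨?_, ?_⟩
        · rw [hm]; exact hu0
        · rw [hm]; exact matchI_succ tr H δ n v

lemma curEst_reach_of_run [Nonempty U] (X0 : Set X) (tr : X → U → X → Prop)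
    (H : X → Y) (δ : ℝ) (y : ℕ → X) (hy0 : y 0 ∈ X0) :
    ∀ k : ℕ, IsRun tr k y →
      (y k, MatchC X0 tr H δ k y) ∈ CurEstReach X0 tr H δ := by
  intro k
  induction k with
  | zero =>
    intro _
    exact ⟨0, fun _ => (y 0, MatchC X0 tr H δ 0 y), fun _ => Classical.arbitrary U,
      ⟨hy0, matchC_zero X0 tr H δ y⟩, fun i hi => absurd hi (by omega), rfl⟩
  | succ k ih =>
    intro hrun
    obtain ⟨u0, hu0⟩ := hrun k (by omega)
    obtain ⟨m, pr, u, h0, hstep, hm⟩ := ih (isRun_mono hrun (by omega))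
    refine ⟨m + 1, snocF m pr (y (k + 1), MatchC X0 tr H δ (k + 1) y),
      updF m u u0, ?_, ?_, snocF_top⟩
    · rw [snocF_le (Nat.zero_le m)]; exact h0
    · intro i hi
      rcases Nat.lt_or_ge i m with h | h
      · rw [snocF_le (by omega : i ≤ m), snocF_le (by omega : i + 1 ≤ m),
          updF_ne (by omega : i ≠ m)]
        exact hstep i h
      · have : i = m := by omega
        subst this
        rw [snocF_le le_rfl, snocF_top, updF_eq]
        refine ⟨?_, ?_⟩
        · rw [hm]; exact hu0
        · rw [hm]; exact matchC_succ X0 tr H δ k y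

lemma initEst_reach_spec {tr : X → U → X → Prop} {H : X → Y} {δ : ℝ}
    {p : X × Set X} (hp : p ∈ InitEstReach tr H δ) :
    ∃ (n : ℕ) (v : ℕ → X), IsRun tr n v ∧ v 0 = p.1 ∧
      p.2 = MatchI tr H δ n v := by
  obtain ⟨m, pr, u, h0, hstep, hm⟩ := hp
  subst hm
  induction m with
  | zero =>
    refine ⟨0, fun _ => (pr 0).1, fun i hi => absurd hi (by omega), rfl, ?_⟩
    rw [matchI_zero]
    exact h0
  | succ m ih =>
    obtain ⟨n, v, hrv, hv0, hv2⟩ := ih (fun i hi => hstep i (by omega))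
    obtain ⟨htr, hq⟩ := hstep m (by omega)
    refine ⟨n + 1, consF (pr (m + 1)).1 v, ?_, rfl, ?_⟩
    · intro i hi
      cases i with
      | zero =>
        refine ⟨u m, ?_⟩
        show tr ((pr (m + 1)).1) (u m) (v 0)
        rw [hv0]
        exact htr
      | succ i => exact hrv i (by omega)
    · calc (pr (m + 1)).2
          = PreSet tr (MatchI tr H δ n v) ∩
            {z | dist (H ((pr (m + 1)).1)) (H z) ≤ δ} := by rw [hq, hv2]
        _ = _ := (matchI_succ tr H δ n (consF (pr (m + 1)).1 v)).symm

lemma curEst_reach_spec {X0 : Set X} {tr : X → U → X → Prop} {H : X → Y} {δ : ℝ}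
    {p : X × Set X} (hp : p ∈ CurEstReach X0 tr H δ) :
    ∃ (k : ℕ) (y : ℕ → X), y 0 ∈ X0 ∧ IsRun tr k y ∧ y k = p.1 ∧
      p.2 = MatchC X0 tr H δ k y := by
  obtain ⟨m, pr, u, h0, hstep, hm⟩ := hp
  subst hm
  induction m with
  | zero =>
    refine ⟨0, fun _ => (pr 0).1, h0.1, fun i hi => absurd hi (by omega), rfl, ?_⟩
    rw [matchC_zero]
    exact h0.2
  | succ m ih =>
    obtain ⟨k, y, hy0, hry, hyk, hy2⟩ := ih (fun i hi => hstep i (by omega))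
    obtain ⟨htr, hq⟩ := hstep m (by omega)
    refine ⟨k + 1, snocF k y (pr (m + 1)).1, ?_, ?_, snocF_top, ?_⟩
    · rw [snocF_le (Nat.zero_le k)]; exact hy0
    · intro i hi
      rcases Nat.lt_or_ge i k with h | h
      · obtain ⟨w, hw⟩ := hry i h
        refine ⟨w, ?_⟩
        rw [snocF_le h.le, snocF_le (by omega : i + 1 ≤ k)]
        exact hw
      · have : i = k := by omega
        subst this
        refine ⟨u m, ?_⟩
        rw [snocF_le le_rfl, snocF_top, hyk]
        exact htr
    · have hcong : ∀ i ≤ k, y i = snocF k y (pr (m + 1)).1 i :=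
        fun i hi => (snocF_le hi).symm
      calc (pr (m + 1)).2
          = PostSet tr (MatchC X0 tr H δ k (snocF k y (pr (m + 1)).1)) ∩
            {z | dist (H (snocF k y (pr (m + 1)).1 (k + 1))) (H z) ≤ δ} := by
            rw [hq, hy2, matchC_congr hcong, snocF_top]
        _ = _ := (matchC_succ X0 tr H δ k (snocF k y (pr (m + 1)).1)).symm

end ReachLemmas

/-- verification of δ-approximate infinite-step opacity of a
finite metric system via the two estimators. -/
theorem approx_inf_opaque_iff_estimators {X U Y : Type*} [Finite X] [Finite U]
    [MetricSpace Y] (X0 XS : Set X) (tr : X → U → X → Prop) (H : X → Y)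
    {δ : ℝ} (hδ : 0 ≤ δ) (hsa : StandingAssumption X0 XS H δ) :
    ApproxInfOpaque X0 XS tr H δ ↔
      ∀ p ∈ InitEstReach tr H δ, ∀ p' ∈ CurEstReach X0 tr H δ,
        p.1 = p'.1 → p.1 ∈ XS → ¬ (p.2 ∩ p'.2 ⊆ XS) := by
  constructor
  · -- opacity implies the estimator condition
    intro hop p hp p' hp' hpp hXS hsub
    obtain ⟨n, v, hrv, hv0, hv2⟩ := initEst_reach_spec hp
    obtain ⟨k, y, hy0, hry, hyk, hy2⟩ := curEst_reach_spec hp'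
    have hyv : y k = v 0 := by rw [hyk, ← hpp, hv0]
    have hxle : ∀ i ≤ k, catF k y v i = y i := fun i hi => catF_le hyv hi
    have hxge : ∀ i, k ≤ i → catF k y v i = v (i - k) := fun i hi => catF_ge hi
    have hrun : IsRun tr (k + n) (catF k y v) := by
      intro i hi
      rcases Nat.lt_or_ge i k with h | h
      · obtain ⟨w, hw⟩ := hry i h
        refine ⟨w, ?_⟩
        rw [hxle i h.le, hxle (i + 1) (by omega)]
        exact hw
      · obtain ⟨w, hw⟩ := hrv (i - k) (by omega)
        refine ⟨w, ?_⟩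
        rw [hxge i h, hxge (i + 1) (by omega),
          (by omega : i + 1 - k = (i - k) + 1)]
        exact hw
    have hxk : catF k y v k = v 0 := by
      rw [hxge k le_rfl, Nat.sub_self]
    obtain ⟨x', hx'0, hrx', hx'k, hdist⟩ :=
      hop (k + n) (catF k y v) k (by omega)
        (by rw [hxle 0 (Nat.zero_le k)]; exact hy0)
        hrun (by rw [hxk, hv0]; exact hXS)
    refine hx'k (hsub ⟨?_, ?_⟩)
    · rw [hv2]
      refine ⟨fun i => x' (k + i), fun i hi => hrx' (k + i) (by omega), rfl, ?_⟩
      intro i hi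
      have h1 := hdist (k + i) (by omega)
      rw [hxge (k + i) (by omega), (by omega : k + i - k = i)] at h1
      exact h1
    · rw [hy2]
      refine ⟨x', hx'0, isRun_mono hrx' (by omega), rfl, ?_⟩
      intro i hi
      have h1 := hdist i (by omega)
      rw [hxle i hi] at h1
      exact h1
  · -- the estimator condition implies opacity
    intro hcond n x k hk hx0 hrun hxk
    rcases Nat.eq_zero_or_pos n with hn | hn
    · subst hn
      have hk0 : k = 0 := by omega
      subst hk0
      obtain ⟨z, hz, hzS⟩ := Set.not_subset.mp (hsa (x 0) hx0)
      refine ⟨fun _ => z, hz.1, fun i hi => absurd hi (by omega), hzS, ?_⟩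
      intro i hi
      have : i = 0 := by omega
      subst this
      exact hz.2
    · have : Nonempty U := ⟨(hrun 0 hn).choose⟩
      have hC := curEst_reach_of_run X0 tr H δ x hx0 k (isRun_mono hrun hk)
      have hrv : IsRun tr (n - k) (fun i => x (k + i)) := by
        intro i hi
        exact hrun (k + i) (by omega)
      have hI := initEst_reach_of_run tr H δ (n - k) (fun i => x (k + i)) hrv
      have hne := hcond _ hI _ hC rfl hxk
      obtain ⟨z, hz, hzS⟩ := Set.not_subset.mp hne
      obtain ⟨hzI, hzC⟩ := hz
      obtain ⟨w2, hrw2, hw20, hd2⟩ := hzI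
      obtain ⟨w1, hw10, hrw1, hw1k, hd1⟩ := hzC
      have hyv' : w1 k = w2 0 := by rw [hw1k, hw20]
      have hx'le : ∀ i ≤ k, catF k w1 w2 i = w1 i := fun i hi => catF_le hyv' hi
      have hx'ge : ∀ i, k ≤ i → catF k w1 w2 i = w2 (i - k) :=
        fun i hi => catF_ge hi
      refine ⟨catF k w1 w2, by rw [hx'le 0 (Nat.zero_le k)]; exact hw10,
        ?_, ?_, ?_⟩
      · intro i hi
        rcases Nat.lt_or_ge i k with h | h
        · obtain ⟨w, hw⟩ := hrw1 i h
          refine ⟨w, ?_⟩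
          rw [hx'le i h.le, hx'le (i + 1) (by omega)]
          exact hw
        · obtain ⟨w, hw⟩ := hrw2 (i - k) (by omega)
          refine ⟨w, ?_⟩
          rw [hx'ge i h, hx'ge (i + 1) (by omega),
            (by omega : i + 1 - k = (i - k) + 1)]
          exact hw
      · rw [hx'ge k le_rfl, Nat.sub_self, hw20]
        exact hzS
      · intro i hi
        rcases Nat.lt_or_ge i k with h | h
        · rw [hx'le i h.le]
          exact hd1 i h.le
        · rw [hx'ge i h]
          have h2 := hd2 (i - k) (by omega)
          simpa [(by omega : k + (i - k) = i)] using h2
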